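/- arXiv:2102.08598 — 5 statements merged into one kernel-verified Lean document; each statement's English description precedes it below -/
import Mathlib

section
/- Let X be a finite type, S ⊆ X a nonempty subset, and Q a nonempty finite set of queries φ : X → [0,1]. Then the best mixture error function D ↦ f_{D,Q}(S) is (1/n)-sensitive: for every pair of neighboring datasets D, D' ∈ X^n, |f_{D,Q}(S) − f_{D',Q}(S)| ≤ 1/n. -/
/-- Two datasets of size `n` are neighboring if they differ in exactly one coordinate. -/
def Neighboring {X : Type*} {n : ℕ} (D D' : Fin n → X) : Prop :=
  ∃ i, D i ≠ D' i ∧ ∀ j, j ≠ i → D j = D' j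

/-- The value of the statistical linear query given by `φ` on the dataset `D`:
`q_φ(D) = (1/n)·Σ_{i<n} φ(D_i)`. -/
noncomputable def qD {X : Type*} {n : ℕ} (φ : X → ℝ) (D : Fin n → X) : ℝ :=
  (∑ i, φ (D i)) / n

/-- The maximum error over the query class `Q` of the mixture with weights `μ` on `S`,
as an approximation of the dataset `D`. -/
noncomputable def mixErr {X : Type*} {n : ℕ} (D : Fin n → X) (Q : Finset (X → ℝ))
    (S : Finset X) (μ : X → ℝ) : ℝ :=
  sSup ((fun φ => |qD φ D - ∑ x ∈ S, μ x * φ x|) '' ↑Q)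

/-- The best mixture error `f_{D,Q}(S)`: the minimum over probability weights `μ` on `S`
of the maximum error over `Q` of the corresponding mixture. -/
noncomputable def bestMixErr {X : Type*} {n : ℕ} (D : Fin n → X) (Q : Finset (X → ℝ))
    (S : Finset X) : ℝ :=
  sInf {e : ℝ | ∃ μ : X → ℝ, (∀ x, 0 ≤ μ x) ∧ (∑ x ∈ S, μ x) = 1 ∧ e = mixErr D Q S μ}


lemma qD_diff {X : Type*} [Fintype X] {n : ℕ} (φ : X → ℝ)
    (hφ : ∀ x, φ x ∈ Set.Icc (0 : ℝ) 1)
    (D D' : Fin n → X) (hDD' : Neighboring D D') :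
    |qD φ D - qD φ D'| ≤ 1 / n := by
  obtain ⟨i, _, hj⟩ := hDD'
  have hn : (0:ℝ) < n := by
    have : n ≠ 0 := by rintro rfl; exact i.elim0
    positivity
  have hsum : (∑ k, φ (D k)) - ∑ k, φ (D' k) = φ (D i) - φ (D' i) := by
    rw [← Finset.sum_sub_distrib]
    rw [Finset.sum_eq_single i]
    · intro b _ hb; rw [hj b hb]; ring
    · intro h; exact absurd (Finset.mem_univ i) h
  have : qD φ D - qD φ D' = (φ (D i) - φ (D' i)) / n := by
    unfold qD; rw [div_sub_div_same, hsum]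
  rw [this, abs_div, abs_of_pos hn]
  apply div_le_div_of_nonneg_right ?_ hn.le |>.trans_eq rfl
  have h1 := hφ (D i); have h2 := hφ (D' i)
  rw [abs_le]; constructor <;> [linarith [h1.1, h2.2]; linarith [h1.2, h2.1]]

lemma aux_le {X : Type*} [Fintype X] {n : ℕ}
    (S : Finset X) (hS : S.Nonempty) (Q : Finset (X → ℝ)) (hQ : Q.Nonempty)
    (hrange : ∀ φ ∈ Q, ∀ x, φ x ∈ Set.Icc (0 : ℝ) 1)
    (D D' : Fin n → X) (hDD' : Neighboring D D') :
    bestMixErr D Q S ≤ bestMixErr D' Q S + 1 / n := by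
  set A := {e : ℝ | ∃ μ : X → ℝ, (∀ x, 0 ≤ μ x) ∧ (∑ x ∈ S, μ x) = 1 ∧ e = mixErr D Q S μ}
  set A' := {e : ℝ | ∃ μ : X → ℝ, (∀ x, 0 ≤ μ x) ∧ (∑ x ∈ S, μ x) = 1 ∧ e = mixErr D' Q S μ}
  obtain ⟨x₀, hx₀⟩ := hS
  have hμex : ∃ μ : X → ℝ, (∀ x, 0 ≤ μ x) ∧ (∑ x ∈ S, μ x) = 1 := by
    classical
    refine ⟨fun x => if x = x₀ then 1 else 0, fun x => by dsimp; split <;> norm_num, ?_⟩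
    rw [Finset.sum_ite_eq' S x₀ (fun _ => (1:ℝ))]
    simp [hx₀]
  have hbddA : BddBelow A := by
    refine ⟨0, ?_⟩
    rintro e ⟨μ, hμ0, hμ1, rfl⟩
    obtain ⟨φ, hφ⟩ := hQ
    have hbdd : BddAbove ((fun φ => |qD φ D - ∑ x ∈ S, μ x * φ x|) '' ↑Q) :=
      (Q.finite_toSet.image _).bddAbove
    calc (0:ℝ) ≤ |qD φ D - ∑ x ∈ S, μ x * φ x| := abs_nonneg _
    _ ≤ _ := le_csSup hbdd ⟨φ, hφ, rfl⟩
  rw [← sub_le_iff_le_add]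
  apply le_csInf
  · obtain ⟨μ, h0, h1⟩ := hμex
    exact ⟨mixErr D' Q S μ, μ, h0, h1, rfl⟩
  rintro e ⟨μ, hμ0, hμ1, rfl⟩
  rw [sub_le_iff_le_add]
  have hmem : mixErr D Q S μ ∈ A := ⟨μ, hμ0, hμ1, rfl⟩
  refine (csInf_le hbddA hmem).trans ?_
  unfold mixErr
  apply csSup_le (hQ.to_set.image _)
  rintro e ⟨φ, hφ, rfl⟩
  have hbdd' : BddAbove ((fun φ => |qD φ D' - ∑ x ∈ S, μ x * φ x|) '' ↑Q) :=
    (Q.finite_toSet.image _).bddAbove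
  have h1 : |qD φ D' - ∑ x ∈ S, μ x * φ x| ≤ mixErr D' Q S μ :=
    le_csSup hbdd' ⟨φ, hφ, rfl⟩
  have h2 := qD_diff φ (hrange φ hφ) D D' hDD'
  calc |qD φ D - ∑ x ∈ S, μ x * φ x|
      ≤ |qD φ D' - ∑ x ∈ S, μ x * φ x| + |qD φ D - qD φ D'| := by
        have := abs_sub_abs_le_abs_sub (qD φ D - ∑ x ∈ S, μ x * φ x) (qD φ D' - ∑ x ∈ S, μ x * φ x)
        have h3 : |(qD φ D - ∑ x ∈ S, μ x * φ x) - (qD φ D' - ∑ x ∈ S, μ x * φ x)| = |qD φ D - qD φ D'| := by ring_nf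
        linarith [abs_sub_abs_le_abs_sub (qD φ D - ∑ x ∈ S, μ x * φ x) (qD φ D' - ∑ x ∈ S, μ x * φ x), h3.le]
  _ ≤ mixErr D' Q S μ + 1 / n := by linarith

/-- The best mixture error function `D ↦ f_{D,Q}(S)` is `(1/n)`-sensitive. -/
theorem bestMixErr_sensitive {X : Type*} [Fintype X] {n : ℕ}
    (S : Finset X) (hS : S.Nonempty) (Q : Finset (X → ℝ)) (hQ : Q.Nonempty)
    (hrange : ∀ φ ∈ Q, ∀ x, φ x ∈ Set.Icc (0 : ℝ) 1)
    (D D' : Fin n → X) (hDD' : Neighboring D D') :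
    |bestMixErr D Q S - bestMixErr D' Q S| ≤ 1 / n := by
  have hsymm : Neighboring D' D := by
    obtain ⟨i, h1, h2⟩ := hDD'
    exact ⟨i, h1.symm, fun j hj => (h2 j hj).symm⟩
  have h1 := aux_le S hS Q hQ hrange D D' hDD'
  have h2 := aux_le S hS Q hQ hrange D' D hsymm
  rw [abs_le]; constructor <;> linarith
end

section
/- Let X be a nonempty finite type and let μ, ν be probability mass functions on X such that ν(x) > 0 whenever μ(x) > 0. Define e^{D₂(μ‖ν)} = Σ_{x : ν(x)>0} μ(x)²/ν(x) and e^{D∞(μ‖ν)} = max_{x : ν(x)>0} μ(x)/ν(x). Let D̃ = (X₁,…,X_n) be n i.i.d. samples from μ and D̂ = (Y₁,…,Y_m) be m i.i.d. samples from ν, independent of D̃, and let X̂ = {Y₁,…,Y_m} ⊆ X be the support of D̂. Let Q be a nonempty finite set of queries φ : X → [0,1], and let α, β > 0. If n ≥ (8/α²)·log(4|Q|/β) and m ≥ ((32/α²)·e^{D₂(μ‖ν)} + (8/(3α))·e^{D∞(μ‖ν)})·log((4|Q|+4)/β), then with probability at least 1 − β (over both samples), f_{D̃,Q}(X̂) ≤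 α. -/
open MeasureTheory

/-- `e^{D₂(μ‖ν)} = Σ_{x : ν(x)>0} μ(x)²/ν(x)`. -/
noncomputable def expD2 {X : Type*} [Fintype X] (μ ν : PMF X) : ℝ :=
  ∑ x ∈ Finset.univ.filter (fun x => ν x ≠ 0), ((μ x).toReal) ^ 2 / (ν x).toReal

/-- `e^{D∞(μ‖ν)} = max_{x : ν(x)>0} μ(x)/ν(x)`. -/
noncomputable def expDinf {X : Type*} (μ ν : PMF X) : ℝ :=
  sSup ((fun x => (μ x).toReal / (ν x).toReal) '' {x | ν x ≠ 0})

/-!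
On the private side, each empirical mean `qD φ D̃` is `α/3`-close to `𝔼_μ φ` by Bernstein's
inequality (range `1`, variance at most `1/4`). On the public side, with the importance weight
`w = μ/ν`, the weighted empirical means `qD (w φ) D̂` are `α/4`-close to `𝔼_ν[w φ] = 𝔼_μ φ`, again
by Bernstein's inequality: `w φ` is bounded by `e^{D∞(μ‖ν)}` and its second moment by
`𝔼_ν[w²] = e^{D₂(μ‖ν)}`. Applying this also to `φ = 1` controls the total weight. On these events
the mixture on the support of `D̂` that weights each sample point by `w` answers `φ` with the ratio
`qD (w φ) D̂ / qD w D̂`, which is `2α/3`-close to `𝔼_μ φ`. For `α > 1` there is nothing to prove,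
since all queries take values in `[0, 1]`.
-/

open Real MeasureTheory ProbabilityTheory

lemma one_add_sub_one_mul_exp_nonneg (u : ℝ) : 0 ≤ 1 + (u - 1) * exp u := by
  have h := add_one_le_exp (-u)
  have hmul : exp (-u) * exp u = 1 := by rw [← exp_add, neg_add_cancel, exp_zero]
  nlinarith [mul_le_mul_of_nonneg_right h (exp_pos u).le]

lemma exp_sub_one_sub_mul_one_sub_div_three_le (u : ℝ) :
    (exp u - 1 - u) * (1 - u / 3) ≤ u ^ 2 / 2 := by
  let f := fun u : ℝ => u ^ 2 / 2 - (exp u - 1 - u) * (1 - u / 3)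
  let g := fun u : ℝ => u - (exp u - 1) * (1 - u / 3) + (exp u - 1 - u) / 3
  have hf : ∀ u, HasDerivAt f (g u) u := fun u =>
    (((hasDerivAt_pow 2 u).div_const 2).sub
      ((((hasDerivAt_exp u).sub_const 1).sub (hasDerivAt_id u)).mul
        (((hasDerivAt_id u).div_const 3).const_sub 1))).congr_deriv (by simp [g]; ring)
  have hg : ∀ u, HasDerivAt g ((1 + (u - 1) * exp u) / 3) u := fun u =>
    (((hasDerivAt_id u).sub (((hasDerivAt_exp u).sub_const 1).mul
      (((hasDerivAt_id u).div_const 3).const_sub 1))).add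
      ((((hasDerivAt_exp u).sub_const 1).sub (hasDerivAt_id u)).div_const 3)).congr_deriv
      (by simp; ring)
  -- `f' = g` is monotone with `g 0 = 0`, so `f` is minimal at `0`, where it vanishes
  have hg_mono : Monotone g := monotone_of_deriv_nonneg (fun u => (hg u).differentiableAt)
    fun u => (hg u).deriv ▸ div_nonneg (one_add_sub_one_mul_exp_nonneg u) (by norm_num)
  have hg0 : g 0 = 0 := by simp [g]
  have hf0 : f 0 = 0 := by simp [f]
  have hfc : Continuous f := by fun_prop
  suffices 0 ≤ f u by simp only [f] at this; linarith
  rcases le_total 0 u with hu | hu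
  · refine hf0 ▸ monotoneOn_of_deriv_nonneg (convex_Ici 0) hfc.continuousOn
      (fun x _ => (hf x).differentiableAt.differentiableWithinAt) (fun x hx => ?_)
      Set.self_mem_Ici hu hu
    rw [interior_Ici] at hx
    exact (hf x).deriv ▸ hg0 ▸ hg_mono (le_of_lt hx)
  · refine hf0 ▸ antitoneOn_of_deriv_nonpos (convex_Iic 0) hfc.continuousOn
      (fun x _ => (hf x).differentiableAt.differentiableWithinAt) (fun x hx => ?_)
      hu Set.self_mem_Iic hu
    rw [interior_Iic] at hx
    exact (hf x).deriv ▸ hg0 ▸ hg_mono (le_of_lt hx)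

lemma exp_mul_le_one_add_mul_add_sq {l y b : ℝ} (hl : 0 ≤ l) (hy : y ≤ b) (hlb : l * b < 3) :
    exp (l * y) ≤ 1 + l * y + l ^ 2 / (2 * (1 - l * b / 3)) * y ^ 2 := by
  have hd : 0 < 1 - l * b / 3 := by linarith
  have hly : 1 - l * b / 3 ≤ 1 - l * y / 3 := by nlinarith
  have hexp : 0 ≤ exp (l * y) - 1 - l * y := by linarith [add_one_le_exp (l * y)]
  have key := (mul_le_mul_of_nonneg_left hly hexp).trans
    (exp_sub_one_sub_mul_one_sub_div_three_le (l * y))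
  have : exp (l * y) - 1 - l * y ≤ (l * y) ^ 2 / 2 / (1 - l * b / 3) := by
    rwa [le_div_iff₀ hd]
  calc exp (l * y) ≤ 1 + l * y + (l * y) ^ 2 / 2 / (1 - l * b / 3) := by linarith
    _ = _ := by field_simp

lemma qD_sub_eq_sum_sub_div {X : Type*} {n : ℕ} (hn : n ≠ 0) (φ : X → ℝ) (D : Fin n → X)
    (c : ℝ) : qD φ D - c = (∑ i, (φ (D i) - c)) / n := by
  rw [qD, Finset.sum_sub_distrib]
  simp only [Finset.sum_const, Finset.card_univ, Fintype.card_fin, nsmul_eq_mul]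
  field_simp

section Bernstein

variable {Ω : Type*} {mΩ : MeasurableSpace Ω} {ρ : Measure Ω} [IsProbabilityMeasure ρ]
  {X : Ω → ℝ} {b v t : ℝ}

lemma mgf_sub_integral_le_bernstein (hX : MemLp X 2 ρ) (hb : ∀ ω, X ω - ρ[X] ≤ b) {l : ℝ}
    (hl : 0 ≤ l) (hlb : l * b < 3) :
    mgf (fun ω => X ω - ρ[X]) ρ l ≤ exp (l ^ 2 / (2 * (1 - l * b / 3)) * Var[X; ρ]) := by
  set c := l ^ 2 / (2 * (1 - l * b / 3))
  have hY : MemLp (fun ω => X ω - ρ[X]) 2 ρ := hX.sub (memLp_const _)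
  have hY1 : Integrable (fun ω => X ω - ρ[X]) ρ := hY.integrable one_le_two
  have hY0 : ∫ ω, (X ω - ρ[X]) ∂ρ = 0 := by
    rw [integral_sub (hX.integrable one_le_two) (integrable_const _)]; simp
  have hlin : Integrable (fun ω => 1 + l * (X ω - ρ[X])) ρ :=
    (integrable_const 1).add (hY1.const_mul l)
  have hsq : Integrable (fun ω => c * (X ω - ρ[X]) ^ 2) ρ := hY.integrable_sq.const_mul c
  calc mgf (fun ω => X ω - ρ[X]) ρ l
      ≤ ∫ ω, (1 + l * (X ω - ρ[X]) + c * (X ω - ρ[X]) ^ 2) ∂ρ :=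
        integral_mono_of_nonneg (ae_of_all _ fun _ => (exp_pos _).le) (hlin.add hsq)
          (ae_of_all _ fun ω => exp_mul_le_one_add_mul_add_sq hl (hb ω) hlb)
    _ = 1 + c * Var[X; ρ] := by
        rw [integral_add hlin hsq, integral_add (integrable_const 1) (hY1.const_mul l),
          integral_const_mul, integral_const_mul, hY0, variance_eq_integral hX.aemeasurable]
        simp
    _ ≤ exp (c * Var[X; ρ]) := by linarith [add_one_le_exp (c * Var[X; ρ])]

theorem measureReal_sum_ge_le_bernstein (hX : MemLp X 2 ρ) (hb : ∀ ω, X ω - ρ[X] ≤ b)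
    (hv : Var[X; ρ] ≤ v) (hv0 : 0 < v) (ht : 0 ≤ t) (k : ℕ) :
    (Measure.pi fun _ : Fin k => ρ).real {ω | k * t ≤ ∑ i, (X (ω i) - ρ[X])} ≤
      exp (-(k * t ^ 2 / (2 * (v + b * t / 3)))) := by
  set Y := fun ω => X ω - ρ[X]
  have hY : MemLp Y 2 ρ := hX.sub (memLp_const _)
  have hb0 : 0 ≤ b := by
    have := integral_mono (hY.integrable one_le_two) (integrable_const b) hb
    rwa [integral_sub (hX.integrable one_le_two) (integrable_const _), integral_const,
      integral_const, probReal_univ, one_smul, one_smul, sub_self] at this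
  set d := v + b * t / 3 with hd_def
  have hd : 0 < d := by positivity
  set l := t / d with hl_def
  have hl : 0 ≤ l := by positivity
  have hlb : l * b < 3 := by
    rw [hl_def, div_mul_eq_mul_div, div_lt_iff₀ hd]; linarith
  -- the choice `l = t / d` of the Chernoff parameter balances the two terms of the exponent
  have hc : l ^ 2 / (2 * (1 - l * b / 3)) * v = l * t / 2 := by
    have : 1 - l * b / 3 = v / d := by rw [hl_def]; field_simp; linarith
    rw [this, hl_def]; field_simp
  set P := Measure.pi fun _ : Fin k => ρ
  have hmeas : ∀ i, AEMeasurable (fun ω : Fin k → Ω => Y (ω i)) P := fun i =>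
    hY.aemeasurable.comp_quasiMeasurePreserving (Measure.quasiMeasurePreserving_eval _ i)
  have hmgf : mgf (∑ i, fun ω : Fin k → Ω => Y (ω i)) P l = mgf Y ρ l ^ k := by
    rw [(iIndepFun_pi fun _ => hY.aemeasurable).mgf_sum₀ hmeas]
    simp only [mgf]
    rw [Finset.prod_congr rfl fun i _ => integral_comp_eval (μ := fun _ : Fin k => ρ) (i := i)
      (f := fun x => exp (l * Y x)) (hY.aemeasurable.const_mul l).exp.aestronglyMeasurable]
    simp
  have hint : Integrable (fun ω => exp (l * (∑ i, fun ω : Fin k → Ω => Y (ω i)) ω)) P := by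
    refine Integrable.of_bound
      ((Finset.aemeasurable_sum _ fun i _ => hmeas i).const_mul l).exp.aestronglyMeasurable
      (exp (l * (k * b))) (ae_of_all _ fun ω => ?_)
    rw [Real.norm_eq_abs, abs_of_pos (exp_pos _), exp_le_exp]
    refine mul_le_mul_of_nonneg_left ?_ hl
    rw [Finset.sum_apply]
    calc ∑ i, Y (ω i) ≤ ∑ _i : Fin k, b := Finset.sum_le_sum fun i _ => hb (ω i)
      _ = k * b := by simp
  calc P.real {ω | k * t ≤ ∑ i, Y (ω i)}
      ≤ exp (-l * (k * t)) * mgf (∑ i, fun ω : Fin k → Ω => Y (ω i)) P l := by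
        simpa [Finset.sum_apply] using measure_ge_le_exp_mul_mgf (k * t) hl hint
    _ ≤ exp (-l * (k * t)) * exp (l ^ 2 / (2 * (1 - l * b / 3)) * v) ^ k := by
        rw [hmgf]
        gcongr
        · exact mgf_nonneg
        · exact (mgf_sub_integral_le_bernstein hX hb hl hlb).trans
            (exp_le_exp.2 (mul_le_mul_of_nonneg_left hv (div_nonneg (sq_nonneg l) (by linarith))))
    _ = exp (-(k * t ^ 2 / (2 * d))) := by
        rw [← exp_nat_mul, ← exp_add, hc, hl_def]
        congr 1
        field_simp
        ring

theorem measureReal_abs_sum_ge_le_bernstein (hX : MemLp X 2 ρ) (hb : ∀ ω, |X ω - ρ[X]| ≤ b)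
    (hv : Var[X; ρ] ≤ v) (hv0 : 0 < v) (ht : 0 ≤ t) (k : ℕ) :
    (Measure.pi fun _ : Fin k => ρ).real {ω | k * t ≤ |∑ i, (X (ω i) - ρ[X])|} ≤
      2 * exp (-(k * t ^ 2 / (2 * (v + b * t / 3)))) := by
  have hup := measureReal_sum_ge_le_bernstein hX (fun ω => (abs_le.1 (hb ω)).2) hv hv0 ht k
  have hdown := measureReal_sum_ge_le_bernstein (X := -X) (b := b) hX.neg
    (fun ω => by rw [Pi.neg_apply, integral_neg']; linarith [(abs_le.1 (hb ω)).1])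
    (by rwa [variance_neg]) hv0 ht k
  calc _ ≤ (Measure.pi fun _ : Fin k => ρ).real
        ({ω | k * t ≤ ∑ i, (X (ω i) - ρ[X])} ∪ {ω | k * t ≤ ∑ i, ((-X) (ω i) - ρ[-X])}) := by
        refine measureReal_mono fun ω hω => ?_
        rcases le_abs'.1 (Set.mem_ofPred.1 hω) with h | h
        · right
          simp only [Set.mem_ofPred, Pi.neg_apply, integral_neg, ← neg_add', ← sub_eq_add_neg,
            Finset.sum_neg_distrib]
          linarith
        · left
          exact h
    _ ≤ _ := (measureReal_union_le _ _).trans (by linarith)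

lemma integral_mem_Icc_zero_one {φ : Ω → ℝ} (hφ : AEMeasurable φ ρ)
    (hrange : ∀ x, φ x ∈ Set.Icc (0 : ℝ) 1) : ρ[φ] ∈ Set.Icc (0 : ℝ) 1 :=
  ⟨integral_nonneg fun x => (hrange x).1, by
    simpa using integral_mono (Integrable.of_mem_Icc 0 1 hφ (ae_of_all _ hrange))
      (integrable_const 1) fun x => (hrange x).2⟩

open Finset in
theorem one_sub_le_measureReal_forall_abs_qD_sub_integral_le {ι : Type*} {s : Finset ι}
    (hs : s.Nonempty) {g : ι → Ω → ℝ} (hg : ∀ i ∈ s, MemLp (g i) 2 ρ)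
    (hb : ∀ i ∈ s, ∀ ω, |g i ω - ρ[g i]| ≤ b) (hv : ∀ i ∈ s, Var[g i; ρ] ≤ v) (hv0 : 0 < v)
    (ht : 0 < t) {δ : ℝ} (hδ : 0 < δ) {k : ℕ}
    (hk : 2 * (v + b * t / 3) / t ^ 2 * log (2 * #s / δ) ≤ k) :
    1 - δ ≤ (Measure.pi fun _ : Fin k => ρ).real {D | ∀ i ∈ s, |qD (g i) D - ρ[g i]| ≤ t} := by
  rcases le_or_gt 1 δ with hδ1 | hδ1
  · exact (sub_nonpos.2 hδ1).trans measureReal_nonneg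
  obtain ⟨i₀, hi₀⟩ := hs
  have hb0 : 0 ≤ b := (abs_nonneg _).trans (hb i₀ hi₀ (nonempty_of_isProbabilityMeasure ρ).some)
  set d := v + b * t / 3
  have hd : 0 < d := by positivity
  have hs0 : (1 : ℝ) ≤ #s := by exact_mod_cast card_pos.2 ⟨i₀, hi₀⟩
  have hL : log (2 * #s / δ) ≤ k * t ^ 2 / (2 * d) := by
    rw [le_div_iff₀ (by positivity)]
    calc log (2 * #s / δ) * (2 * d) = 2 * d / t ^ 2 * log (2 * #s / δ) * t ^ 2 := by
          field_simp
      _ ≤ k * t ^ 2 := by gcongr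
  have hk0 : k ≠ 0 := by
    have : 0 < log (2 * #s / δ) := log_pos (by rw [one_lt_div hδ]; linarith)
    have : (0 : ℝ) < k := lt_of_lt_of_le (by positivity) hk
    exact_mod_cast this.ne'
  set P := Measure.pi fun _ : Fin k => ρ
  set bad := fun i => {D : Fin k → Ω | k * t ≤ |∑ j, (g i (D j) - ρ[g i])|}
  have hbad : ∀ i ∈ s, P.real (bad i) ≤ δ / #s := fun i hi =>
    calc P.real (bad i) ≤ 2 * exp (-(k * t ^ 2 / (2 * d))) :=
          measureReal_abs_sum_ge_le_bernstein (hg i hi) (hb i hi) (hv i hi) hv0 ht.le k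
      _ ≤ 2 * exp (-log (2 * #s / δ)) := by gcongr
      _ = δ / #s := by rw [exp_neg, exp_log (by positivity)]; field_simp
  have hunion : P.real (⋃ i ∈ s, bad i) ≤ δ := by
    refine (measureReal_biUnion_finset_le s bad).trans ((sum_le_card_nsmul _ _ _ hbad).trans ?_)
    rw [nsmul_eq_mul, mul_div_cancel₀ _ (by positivity)]
  set good := {D : Fin k → Ω | ∀ i ∈ s, |qD (g i) D - ρ[g i]| ≤ t}
  have hgood : goodᶜ ⊆ ⋃ i ∈ s, bad i := fun D hD => by
    obtain ⟨i, hi, h⟩ : ∃ i ∈ s, t < |qD (g i) D - ρ[g i]| := by simpa [good] using hD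
    rw [qD_sub_eq_sum_sub_div hk0, abs_div, Nat.abs_cast, lt_div_iff₀ (by positivity)] at h
    exact Set.mem_biUnion hi (by simpa [bad, mul_comm] using h.le)
  have hcompl := measureReal_union_le (μ := P) good goodᶜ
  rw [Set.union_compl_self, probReal_univ] at hcompl
  linarith [measureReal_mono hgood (measure_ne_top P _)]

open Finset in
theorem one_sub_half_le_measureReal_forall_abs_qD_sub_integral_le_of_mem_Icc
    {Q : Finset (Ω → ℝ)} (hQ : Q.Nonempty) (hmeas : ∀ φ ∈ Q, AEMeasurable φ ρ)
    (hrange : ∀ φ ∈ Q, ∀ x, φ x ∈ Set.Icc (0 : ℝ) 1) {α β : ℝ} (hα : 0 < α) (hα1 : α ≤ 1)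
    (hβ : 0 < β) (hβ1 : β ≤ 1) {n : ℕ} (hn : 8 / α ^ 2 * log (4 * #Q / β) ≤ n) :
    1 - β / 2 ≤
      (Measure.pi fun _ : Fin n => ρ).real {D | ∀ φ ∈ Q, |qD φ D - ρ[φ]| ≤ α / 3} := by
  refine one_sub_le_measureReal_forall_abs_qD_sub_integral_le (g := fun φ => φ) (b := 1)
    (v := 1 / 4) hQ
    (fun φ hφ => memLp_of_bounded (ae_of_all _ (hrange φ hφ)) (hmeas φ hφ).aestronglyMeasurable 2)
    (fun φ hφ x => ?_) (fun φ hφ => (variance_le_sq_of_bounded (ae_of_all _ (hrange φ hφ))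
      (hmeas φ hφ)).trans (by norm_num)) (by norm_num) (by positivity) (by positivity) ?_
  · have hx := hrange φ hφ x
    have := integral_mem_Icc_zero_one (hmeas φ hφ) (hrange φ hφ)
    exact abs_le.2 ⟨by linarith [hx.1, this.2], by linarith [hx.2, this.1]⟩
  have hL : 0 ≤ log (4 * #Q / β) := by
    have : (1 : ℝ) ≤ #Q := by exact_mod_cast hQ.card_pos
    exact log_nonneg (by rw [le_div_iff₀ hβ]; linarith)
  rw [show 2 * (#Q : ℝ) / (β / 2) = 4 * #Q / β by ring]
  refine le_trans (mul_le_mul_of_nonneg_right ?_ hL) hn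
  rw [div_le_div_iff₀ (by positivity) (by positivity)]
  nlinarith

end Bernstein

section Mixture

open Finset

variable {X : Type*} {n m : ℕ}

lemma qD_mem_Icc {φ : X → ℝ} (hφ : ∀ x, φ x ∈ Set.Icc (0 : ℝ) 1) (D : Fin n → X) :
    qD φ D ∈ Set.Icc (0 : ℝ) 1 := by
  refine ⟨div_nonneg (sum_nonneg fun i _ => (hφ (D i)).1) n.cast_nonneg,
    div_le_one_of_le₀ ?_ n.cast_nonneg⟩
  calc ∑ i, φ (D i) ≤ ∑ _i : Fin n, (1 : ℝ) := sum_le_sum fun i _ => (hφ (D i)).2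
    _ = n := by simp

lemma bestMixErr_le {D : Fin n → X} {Q : Finset (X → ℝ)} {S : Finset X} {θ : X → ℝ}
    (hθ : ∀ x, 0 ≤ θ x) (hθS : ∑ x ∈ S, θ x = 1) {e : ℝ} (he : 0 ≤ e)
    (hQ : ∀ φ ∈ Q, |qD φ D - ∑ x ∈ S, θ x * φ x| ≤ e) : bestMixErr D Q S ≤ e := by
  refine csInf_le_of_le ⟨0, ?_⟩ ⟨θ, hθ, hθS, rfl⟩
    (Real.sSup_le (by rintro _ ⟨φ, hφ, rfl⟩; exact hQ φ hφ) he)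
  rintro _ ⟨θ', -, -, rfl⟩
  exact Real.sSup_nonneg (by rintro _ ⟨φ, -, rfl⟩; exact abs_nonneg _)

lemma bestMixErr_le_one (D : Fin n → X) {Q : Finset (X → ℝ)}
    (hQ : ∀ φ ∈ Q, ∀ x, φ x ∈ Set.Icc (0 : ℝ) 1) (S : Finset X) : bestMixErr D Q S ≤ 1 := by
  classical
  rcases S.eq_empty_or_nonempty with rfl | ⟨x₀, hx₀⟩
  · -- no weights sum to `1` over `∅`, and `sInf ∅ = 0`
    simp [bestMixErr]
  refine bestMixErr_le (θ := fun x => if x = x₀ then 1 else 0) (fun x => by positivity)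
    (by simp [hx₀]) zero_le_one fun φ hφ => ?_
  have hq := qD_mem_Icc (hQ φ hφ) D
  have hx := hQ φ hφ x₀
  simp only [ite_mul, one_mul, zero_mul, sum_ite_eq', if_pos hx₀]
  rw [abs_le]
  constructor <;> linarith [hq.1, hq.2, hx.1, hx.2]

variable [DecidableEq X]

noncomputable def weightedEmpirical (w : X → ℝ) (Y : Fin m → X) (x : X) : ℝ :=
  #{j | Y j = x} * w x / ∑ j, w (Y j)

lemma sum_image_weightedEmpirical_mul (w : X → ℝ) (Y : Fin m → X) (g : X → ℝ) :
    ∑ x ∈ univ.image Y, weightedEmpirical w Y x * g x =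
      (∑ j, w (Y j) * g (Y j)) / ∑ j, w (Y j) := by
  rw [sum_comp (fun x => w x * g x) Y, sum_div]
  refine sum_congr rfl fun x _ => ?_
  rw [weightedEmpirical, nsmul_eq_mul]
  ring

theorem bestMixErr_image_le {D : Fin n → X} {Y : Fin m → X} {Q : Finset (X → ℝ)}
    {w : X → ℝ} (hw : ∀ x, 0 ≤ w x) {p : (X → ℝ) → ℝ} (hp : ∀ φ ∈ Q, p φ ∈ Set.Icc (0 : ℝ) 1)
    {α : ℝ} (hα : α ≤ 1) (hD : ∀ φ ∈ Q, |qD φ D - p φ| ≤ α / 3)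
    (hY : ∀ φ ∈ Q, |qD (fun x => w x * φ x) Y - p φ| ≤ α / 4) (hW : |qD w Y - 1| ≤ α / 4) :
    bestMixErr D Q (univ.image Y) ≤ α := by
  have hα0 : 0 ≤ α := by linarith [abs_nonneg (qD w Y - 1)]
  have hW0 : 3 / 4 ≤ qD w Y := by linarith [(abs_le.1 hW).1]
  have hm : (m : ℝ) ≠ 0 := by
    rintro hm
    rw [qD, hm, div_zero] at hW0
    norm_num at hW0
  have hmix : ∀ g : X → ℝ, ∑ x ∈ univ.image Y, weightedEmpirical w Y x * g x =
      qD (fun x => w x * g x) Y / qD w Y := fun g => by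
    rw [sum_image_weightedEmpirical_mul, qD, qD, div_div_div_cancel_right₀ hm]
  refine bestMixErr_le (θ := weightedEmpirical w Y) (fun x => div_nonneg
    (mul_nonneg (Nat.cast_nonneg _) (hw x)) (sum_nonneg fun j _ => hw (Y j))) ?_ hα0
    fun φ hφ => ?_
  · simpa [div_self (by linarith : qD w Y ≠ 0)] using hmix fun _ => 1
  -- the mixture's answer is a ratio of two empirical means, each `α / 4`-close to its target
  have hratio : |p φ - qD (fun x => w x * φ x) Y / qD w Y| ≤ 2 * α / 3 := by
    obtain ⟨hp0, hp1⟩ := hp φ hφ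
    rw [show p φ - qD (fun x => w x * φ x) Y / qD w Y =
        (p φ * (qD w Y - 1) - (qD (fun x => w x * φ x) Y - p φ)) / qD w Y by
          field_simp; ring, abs_div, abs_of_pos (a := qD w Y) (by linarith),
      div_le_iff₀ (by linarith)]
    calc _ ≤ |p φ * (qD w Y - 1)| + |qD (fun x => w x * φ x) Y - p φ| := abs_sub _ _
      _ ≤ 1 * (α / 4) + α / 4 := by
          rw [abs_mul, abs_of_nonneg hp0]
          gcongr
          exact hY φ hφ
      _ ≤ 2 * α / 3 * qD w Y := by nlinarith
  rw [hmix]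
  calc _ ≤ |qD φ D - p φ| + |p φ - qD (fun x => w x * φ x) Y / qD w Y| := abs_sub_le _ _ _
    _ ≤ α := by linarith [hD φ hφ]

end Mixture

section ImportanceWeight

open Finset

variable {X : Type*}

noncomputable def importanceWeight (μ ν : PMF X) (x : X) : ℝ :=
  (μ x).toReal / (ν x).toReal

lemma importanceWeight_nonneg (μ ν : PMF X) (x : X) : 0 ≤ importanceWeight μ ν x :=
  div_nonneg ENNReal.toReal_nonneg ENNReal.toReal_nonneg

lemma importanceWeight_le_expDinf [Finite X] (μ ν : PMF X) (x : X) :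
    importanceWeight μ ν x ≤ expDinf μ ν := by
  by_cases hx : ν x = 0
  · rw [importanceWeight, hx, ENNReal.toReal_zero, div_zero]
    exact Real.sSup_nonneg (by rintro _ ⟨y, -, rfl⟩; exact importanceWeight_nonneg μ ν y)
  · exact le_csSup (Set.toFinite _).bddAbove ⟨x, hx, rfl⟩

variable [Fintype X] [MeasurableSpace X] [MeasurableSingletonClass X] {μ ν : PMF X}

lemma integral_importanceWeight_mul (habs : ∀ x, μ x ≠ 0 → ν x ≠ 0) (φ : X → ℝ) :
    ∫ x, importanceWeight μ ν x * φ x ∂ν.toMeasure = ∫ x, φ x ∂μ.toMeasure := by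
  rw [PMF.integral_eq_sum, PMF.integral_eq_sum]
  refine sum_congr rfl fun x _ => ?_
  by_cases hx : ν x = 0
  · simp [hx, not_imp_not.1 (habs x) hx]
  · have : (ν x).toReal ≠ 0 := ENNReal.toReal_ne_zero.2 ⟨hx, ν.apply_ne_top x⟩
    simp only [importanceWeight, smul_eq_mul]
    field_simp

lemma integral_importanceWeight_sq (μ ν : PMF X) :
    ∫ x, importanceWeight μ ν x ^ 2 ∂ν.toMeasure = expD2 μ ν := by
  rw [PMF.integral_eq_sum, expD2, sum_filter]
  refine sum_congr rfl fun x _ => ?_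
  by_cases hx : ν x = 0
  · simp [hx]
  · have : (ν x).toReal ≠ 0 := ENNReal.toReal_ne_zero.2 ⟨hx, ν.apply_ne_top x⟩
    simp only [importanceWeight, smul_eq_mul, if_pos hx]
    field_simp

lemma one_le_expDinf (habs : ∀ x, μ x ≠ 0 → ν x ≠ 0) : 1 ≤ expDinf μ ν := by
  have h := integral_importanceWeight_mul habs fun _ => 1
  simp only [mul_one, integral_const, probReal_univ, one_smul] at h
  calc 1 = ∫ x, importanceWeight μ ν x ∂ν.toMeasure := h.symm
    _ ≤ ∫ _, expDinf μ ν ∂ν.toMeasure :=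
        integral_mono .of_finite (integrable_const _) (importanceWeight_le_expDinf μ ν)
    _ = expDinf μ ν := by simp

lemma one_le_expD2 (habs : ∀ x, μ x ≠ 0 → ν x ≠ 0) : 1 ≤ expD2 μ ν := by
  have h := integral_importanceWeight_mul habs fun _ => 1
  simp only [mul_one, integral_const, probReal_univ, one_smul] at h
  have hvar := variance_nonneg (importanceWeight μ ν) ν.toMeasure
  rw [variance_eq_sub .of_discrete, h] at hvar
  simp only [Pi.pow_apply, integral_importanceWeight_sq] at hvar
  linarith

lemma abs_importanceWeight_mul_sub_integral_le (habs : ∀ x, μ x ≠ 0 → ν x ≠ 0) {φ : X → ℝ}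
    (hφ : ∀ x, φ x ∈ Set.Icc (0 : ℝ) 1) (x : X) :
    |importanceWeight μ ν x * φ x - ∫ y, importanceWeight μ ν y * φ y ∂ν.toMeasure| ≤
      expDinf μ ν := by
  have hp := integral_mem_Icc_zero_one (ρ := μ.toMeasure) .of_discrete hφ
  have hle := (mul_le_of_le_one_right (importanceWeight_nonneg μ ν x) (hφ x).2).trans
    (importanceWeight_le_expDinf μ ν x)
  have h0 := mul_nonneg (importanceWeight_nonneg μ ν x) (hφ x).1
  rw [integral_importanceWeight_mul habs]
  exact abs_le.2 ⟨by linarith [hp.2, one_le_expDinf habs], by linarith [hp.1]⟩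

lemma variance_importanceWeight_mul_le {φ : X → ℝ} (hφ : ∀ x, φ x ∈ Set.Icc (0 : ℝ) 1) :
    Var[fun x => importanceWeight μ ν x * φ x; ν.toMeasure] ≤ expD2 μ ν := by
  refine (variance_le_expectation_sq .of_discrete).trans ((integral_mono .of_finite .of_finite
    fun x => ?_).trans_eq (integral_importanceWeight_sq μ ν))
  simp only [Pi.pow_apply, mul_pow]
  exact mul_le_of_le_one_right (sq_nonneg _) (pow_le_one₀ (hφ x).1 (hφ x).2)

theorem one_sub_half_le_measureReal_forall_abs_qD_importanceWeight_mul_sub_le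
    (habs : ∀ x, μ x ≠ 0 → ν x ≠ 0) {Q : Finset (X → ℝ)}
    (hrange : ∀ φ ∈ Q, ∀ x, φ x ∈ Set.Icc (0 : ℝ) 1) {α β : ℝ} (hα : 0 < α) (hβ : 0 < β)
    {m : ℕ} (hm : (32 / α ^ 2 * expD2 μ ν + 8 / (3 * α) * expDinf μ ν) *
        log ((4 * #Q + 4) / β) ≤ m) :
    1 - β / 2 ≤ (Measure.pi fun _ : Fin m => ν.toMeasure).real
      {Y | (∀ φ ∈ Q, |qD (fun x => importanceWeight μ ν x * φ x) Y - μ.toMeasure[φ]| ≤ α / 4) ∧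
        |qD (importanceWeight μ ν) Y - 1| ≤ α / 4} := by
  classical
  -- the constant query `1` is added to control the total importance weight of the sample
  set s := insert (fun _ : X => (1 : ℝ)) Q
  have hs : ∀ φ ∈ s, ∀ x, φ x ∈ Set.Icc (0 : ℝ) 1 := by simpa [s] using hrange
  have hb1 := one_le_expDinf habs
  have hv1 := one_le_expD2 habs
  refine (one_sub_le_measureReal_forall_abs_qD_sub_integral_le (ρ := ν.toMeasure) (s := s)
    (g := fun φ x => importanceWeight μ ν x * φ x) (t := α / 4) (δ := β / 2) (k := m)
    (insert_nonempty _ _) (fun _ _ => .of_discrete)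
    (fun φ hφ => abs_importanceWeight_mul_sub_integral_le habs (hs φ hφ))
    (fun φ hφ => variance_importanceWeight_mul_le (hs φ hφ)) (by linarith) (by positivity)
    (by positivity) ?_).trans (measureReal_mono fun Y hY => ⟨fun φ hφ => ?_, ?_⟩)
  · refine le_trans ?_ hm
    rw [show 2 * (expD2 μ ν + expDinf μ ν * (α / 4) / 3) / (α / 4) ^ 2 =
      32 / α ^ 2 * expD2 μ ν + 8 / (3 * α) * expDinf μ ν by field_simp; ring]
    refine mul_le_mul_of_nonneg_left (log_le_log (by positivity) ?_) (by positivity)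
    have : (#s : ℝ) ≤ #Q + 1 := by exact_mod_cast card_insert_le _ _
    rw [div_div_eq_mul_div, div_le_div_iff_of_pos_right hβ]
    linarith
  · simpa only [integral_importanceWeight_mul habs] using hY φ (mem_insert_of_mem hφ)
  · have h1 := hY _ (mem_insert_self _ _)
    rw [integral_importanceWeight_mul habs] at h1
    simpa using h1

end ImportanceWeight

theorem bestMixErr_small_whp_general {X : Type*} [Fintype X] [DecidableEq X]
    [MeasurableSpace X] [MeasurableSingletonClass X]
    (μ ν : PMF X) (habs : ∀ x, μ x ≠ 0 → ν x ≠ 0)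
    (Q : Finset (X → ℝ)) (hQ : Q.Nonempty)
    (hrange : ∀ φ ∈ Q, ∀ x, φ x ∈ Set.Icc (0 : ℝ) 1)
    (n m : ℕ) (α β : ℝ) (hα : 0 < α) (hβ : 0 < β)
    (hn : 8 / α ^ 2 * Real.log (4 * Q.card / β) ≤ n)
    (hm : (32 / α ^ 2 * expD2 μ ν + 8 / (3 * α) * expDinf μ ν) *
        Real.log ((4 * Q.card + 4) / β) ≤ m) :
    ENNReal.ofReal (1 - β) ≤
      ((Measure.pi fun _ : Fin n => μ.toMeasure).prod
          (Measure.pi fun _ : Fin m => ν.toMeasure))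
        {p : (Fin n → X) × (Fin m → X) |
          bestMixErr p.1 Q (Finset.univ.image p.2) ≤ α} := by
  rcases le_or_gt 1 β with hβ1 | hβ1
  · rw [ENNReal.ofReal_eq_zero.2 (by linarith)]
    exact zero_le
  rw [← ofReal_measureReal]
  refine ENNReal.ofReal_le_ofReal ?_
  rcases le_or_gt α 1 with hα1 | hα1
  · have hD := one_sub_half_le_measureReal_forall_abs_qD_sub_integral_le_of_mem_Icc
      (ρ := μ.toMeasure) hQ (fun _ _ => .of_discrete) hrange hα hα1 hβ hβ1.le hn
    have hY := one_sub_half_le_measureReal_forall_abs_qD_importanceWeight_mul_sub_le habs hrange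
      hα hβ hm
    calc 1 - β ≤ (1 - β / 2) * (1 - β / 2) := by nlinarith
      _ ≤ _ := mul_le_mul hD hY (by linarith) measureReal_nonneg
      _ = _ := (measureReal_prod_prod _ _).symm
      _ ≤ _ := by
          refine measureReal_mono fun p ⟨hp₁, hp₂, hp₃⟩ => ?_
          exact bestMixErr_image_le (importanceWeight_nonneg μ ν)
            (p := fun φ => ∫ x, φ x ∂μ.toMeasure)
            (fun φ hφ => integral_mem_Icc_zero_one .of_discrete (hrange φ hφ)) hα1 hp₁ hp₂ hp₃
  · have hall (p : (Fin n → X) × (Fin m → X)) : bestMixErr p.1 Q (Finset.univ.image p.2) ≤ α :=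
      (bestMixErr_le_one p.1 hrange _).trans hα1.le
    simp only [hall, Set.ofPred_true, probReal_univ]
    linarith

/-- If the private dataset `D̃ ∼ μⁿ` and the public dataset `D̂ ∼ νᵐ` are large enough, then
with probability at least `1 − β`, the best mixture error of the support of `D̂` for
approximating `D̃` over the query class `Q` is at most `α`. -/
theorem bestMixErr_small_whp {X : Type*} [Fintype X] [Nonempty X] [DecidableEq X]
    [MeasurableSpace X] [MeasurableSingletonClass X]
    (μ ν : PMF X) (habs : ∀ x, μ x ≠ 0 → ν x ≠ 0)
    (Q : Finset (X → ℝ)) (hQ : Q.Nonempty)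
    (hrange : ∀ φ ∈ Q, ∀ x, φ x ∈ Set.Icc (0 : ℝ) 1)
    (n m : ℕ) (α β : ℝ) (hα : 0 < α) (hβ : 0 < β)
    (hn : 8 / α ^ 2 * Real.log (4 * Q.card / β) ≤ n)
    (hm : (32 / α ^ 2 * expD2 μ ν + 8 / (3 * α) * expDinf μ ν) *
        Real.log ((4 * Q.card + 4) / β) ≤ m) :
    ENNReal.ofReal (1 - β) ≤
      ((Measure.pi fun _ : Fin n => μ.toMeasure).prod
          (Measure.pi fun _ : Fin m => ν.toMeasure))
        {p : (Fin n → X) × (Fin m → X) |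
          bestMixErr p.1 Q (Finset.univ.image p.2) ≤ α} :=
  bestMixErr_small_whp_general μ ν habs Q hQ hrange n m α β hα hβ hn hm
end

section
/- Let X be a nonempty finite type and let μ, ν be probability mass functions on X such that ν(x) > 0 whenever μ(x) > 0. Let g(x) = μ(x)/ν(x) for x with ν(x) > 0 (and g(x) = 0 otherwise), let V = Σ_{x : ν(x)>0} μ(x)²/ν(x) and B = max_{x : ν(x)>0} μ(x)/ν(x). Let Y₁,…,Y_m be m i.i.d. samples from ν and let 0 < α ≤ 1. Then Pr[ |Σ_{i=1}^m g(Y_i) − m| ≥ (α/4)·m ] ≤ 2·exp( −α²·m / (32·(V − 1) + (8/3)·α·B) ). -/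
open MeasureTheory

/-! Centre the weights: `Z = g(Y) - 1` has mean `Σ μ(x) - 1 = 0`, second moment `V - 1`, and
`|Z| ≤ B` because `0 ≤ g ≤ B` and `B ≥ E[g] = 1`. Bernstein's inequality for the `m` independent
copies then gives the bound at `t = α m / 4`. Bernstein itself is the Chernoff bound with the
moment-generating-function estimate `E[exp(l Z)] ≤ exp(l² E[Z²] / (2(1 - l b / 3)))` for `l b < 3`,
which comes from `k! ≥ 2 · 3^(k-2)` in the exponential series. -/

open ProbabilityTheory Real
open scoped Nat

lemma Real.exp_sub_one_sub_le {x u : ℝ} (hx : |x| ≤ u) (hu : u < 3) :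
    exp x - 1 - x ≤ x ^ 2 / (2 * (1 - u / 3)) := by
  have hexp : HasSum (fun k : ℕ => x ^ (k + 2) / (k + 2)!) (exp x - 1 - x) := by
    have h := NormedSpace.expSeries_div_hasSum_exp x
    rw [← exp_eq_exp_ℝ] at h
    simpa [Finset.sum_range_succ, sub_sub] using (hasSum_nat_add_iff' 2).mpr h
  have hu0 : 0 ≤ u := (abs_nonneg x).trans hx
  have hgeom : HasSum (fun k : ℕ => x ^ 2 / 2 * (u / 3) ^ k) (x ^ 2 / (2 * (1 - u / 3))) := by
    have := (hasSum_geometric_of_lt_one (r := u / 3) (by positivity) (by linarith)).mul_left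
      (x ^ 2 / 2)
    rwa [← div_div, div_eq_mul_inv (x ^ 2 / 2)]
  refine hasSum_le (fun k => ?_) hexp hgeom
  have hpow : x ^ k ≤ u ^ k :=
    (le_abs_self _).trans ((abs_pow x k).trans_le (pow_le_pow_left₀ (abs_nonneg x) hx k))
  have hfact : 2! * (2 + 1) ^ k ≤ (k + 2)! := by
    rw [add_comm k]; exact Nat.factorial_mul_pow_le_factorial
  calc x ^ (k + 2) / (k + 2)! ≤ x ^ 2 * u ^ k / (k + 2)! := by
        rw [pow_add, mul_comm]; gcongr
    _ ≤ x ^ 2 * u ^ k / (2 * 3 ^ k) := by gcongr; exact_mod_cast hfact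
    _ = x ^ 2 / 2 * (u / 3) ^ k := by rw [div_pow]; ring

/-- The Chernoff parameter `l = t / (v + b t / 3)` is optimal; when `v = 0` it reaches `l b = 3`,
and `l = 3 / (2 b)` gives the same exponent. -/
lemma exists_bernstein_parameter {v b t : ℝ} (hv : 0 ≤ v) (ht : 0 ≤ t)
    (hD : 0 < v + b * t / 3) :
    ∃ l, 0 ≤ l ∧ l * b < 3 ∧
      -l * t + l ^ 2 * v / (2 * (1 - l * b / 3)) = -t ^ 2 / (2 * (v + b * t / 3)) := by
  rcases hv.eq_or_lt with rfl | hv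
  · have hbt : 0 < b * t := by linarith
    have hb : 0 < b := pos_of_mul_pos_left hbt ht
    refine ⟨3 / (2 * b), by positivity, by field_simp; norm_num, ?_⟩
    field_simp
    ring
  · set D := v + b * t / 3 with hD_def
    refine ⟨t / D, by positivity, ?_, ?_⟩
    · rw [div_mul_eq_mul_div, div_lt_iff₀ hD]; linarith
    · have hc : 1 - t / D * b / 3 = v / D := by
        rw [eq_div_iff hD.ne']; field_simp; linarith
      rw [hc]
      field_simp
      ring

section Bernstein

variable {Ω : Type*} [MeasurableSpace Ω] {μ : Measure Ω} [IsProbabilityMeasure μ] {b t : ℝ}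

lemma mgf_le_exp_of_abs_le {X : Ω → ℝ} (hX : AEMeasurable X μ) (hb : ∀ᵐ ω ∂μ, |X ω| ≤ b)
    (h0 : μ[X] = 0) (ht : 0 ≤ t) (htb : t * b < 3) :
    mgf X μ t ≤ exp (t ^ 2 * (∫ ω, X ω ^ 2 ∂μ) / (2 * (1 - t * b / 3))) := by
  set c := 2 * (1 - t * b / 3)
  set σ2 := ∫ ω, X ω ^ 2 ∂μ
  have hX_int : Integrable X μ :=
    .of_bound hX.aestronglyMeasurable b (by simpa only [Real.norm_eq_abs] using hb)
  have hX2_int : Integrable (fun ω => X ω ^ 2) μ :=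
    .of_bound (hX.pow_const 2).aestronglyMeasurable (b ^ 2) (by
      filter_upwards [hb] with ω hω
      rw [Real.norm_eq_abs, abs_pow]
      exact pow_le_pow_left₀ (abs_nonneg _) hω 2)
  have h_lin_int := (integrable_const 1).add (hX_int.const_mul t)
  have hpointwise : ∀ᵐ ω ∂μ, exp (t * X ω) ≤ 1 + t * X ω + t ^ 2 / c * X ω ^ 2 := by
    filter_upwards [hb] with ω hω
    have h := Real.exp_sub_one_sub_le (x := t * X ω) (u := t * b)
      (by rw [abs_mul, abs_of_nonneg ht]; exact mul_le_mul_of_nonneg_left hω ht) htb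
    rw [mul_pow, mul_div_right_comm] at h
    linarith
  calc mgf X μ t ≤ ∫ ω, (1 + t * X ω + t ^ 2 / c * X ω ^ 2) ∂μ :=
        integral_mono_ae
          (integrable_exp_mul_of_le t b ht hX (hb.mono fun _ h => (le_abs_self _).trans h))
          (h_lin_int.add (hX2_int.const_mul _)) hpointwise
    _ = 1 + t ^ 2 * σ2 / c := by
        rw [integral_add (f := fun ω => 1 + t * X ω) h_lin_int (hX2_int.const_mul _),
          integral_add (f := fun _ => 1) (integrable_const 1) (hX_int.const_mul t),
          integral_const_mul, integral_const_mul, h0]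
        simp only [integral_const, probReal_univ, smul_eq_mul]
        ring
    _ ≤ exp (t ^ 2 * σ2 / c) := by linarith [add_one_le_exp (t ^ 2 * σ2 / c)]

lemma measure_sum_ge_le_exp_of_mul_lt_three {ι : Type*} {X : ι → Ω → ℝ}
    (h_indep : iIndepFun X μ) (h_meas : ∀ i, Measurable (X i)) {s : Finset ι}
    (hb : ∀ i ∈ s, ∀ᵐ ω ∂μ, |X i ω| ≤ b) (h0 : ∀ i ∈ s, μ[X i] = 0) {l : ℝ} (hl : 0 ≤ l)
    (hlb : l * b < 3) :
    μ.real {ω | t ≤ ∑ i ∈ s, X i ω} ≤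
      exp (-l * t + l ^ 2 * (∑ i ∈ s, ∫ ω, X i ω ^ 2 ∂μ) / (2 * (1 - l * b / 3))) := by
  have h_int : ∀ i ∈ s, Integrable (fun ω => exp (l * X i ω)) μ := fun i hi =>
    integrable_exp_mul_of_le l b hl (h_meas i).aemeasurable
      ((hb i hi).mono fun _ h => (le_abs_self _).trans h)
  have h_chernoff := measure_ge_le_exp_mul_mgf (X := ∑ i ∈ s, X i) t hl
    (h_indep.integrable_exp_mul_sum h_meas h_int)
  simp only [Finset.sum_apply] at h_chernoff
  refine h_chernoff.trans ?_
  rw [h_indep.mgf_sum h_meas, Finset.mul_sum, Finset.sum_div, exp_add, exp_sum]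
  gcongr with i hi
  · exact fun i _ => mgf_nonneg
  · exact mgf_le_exp_of_abs_le (h_meas i).aemeasurable (hb i hi) (h0 i hi) hl hlb

theorem measure_sum_ge_le_exp_bernstein {ι : Type*} {X : ι → Ω → ℝ} (h_indep : iIndepFun X μ)
    (h_meas : ∀ i, Measurable (X i)) {s : Finset ι} (hb : ∀ i ∈ s, ∀ᵐ ω ∂μ, |X i ω| ≤ b)
    (h0 : ∀ i ∈ s, μ[X i] = 0) (ht : 0 ≤ t) :
    μ.real {ω | t ≤ ∑ i ∈ s, X i ω} ≤
      exp (-t ^ 2 / (2 * (∑ i ∈ s, ∫ ω, X i ω ^ 2 ∂μ + b * t / 3))) := by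
  set v := ∑ i ∈ s, ∫ ω, X i ω ^ 2 ∂μ
  rcases le_or_gt (v + b * t / 3) 0 with hD | hD
  · refine measureReal_le_one.trans (one_le_exp ?_)
    exact div_nonneg_of_nonpos (neg_nonpos.mpr (sq_nonneg t)) (by linarith)
  have hv : 0 ≤ v := Finset.sum_nonneg fun i _ => integral_nonneg fun ω => sq_nonneg _
  obtain ⟨l, hl, hlb, hexp⟩ := exists_bernstein_parameter hv ht hD
  rw [← hexp]
  exact measure_sum_ge_le_exp_of_mul_lt_three h_indep h_meas hb h0 hl hlb

theorem measure_abs_sum_ge_le_two_mul_exp_bernstein {ι : Type*} {X : ι → Ω → ℝ}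
    (h_indep : iIndepFun X μ) (h_meas : ∀ i, Measurable (X i)) {s : Finset ι}
    (hb : ∀ i ∈ s, ∀ᵐ ω ∂μ, |X i ω| ≤ b) (h0 : ∀ i ∈ s, μ[X i] = 0) (ht : 0 ≤ t) :
    μ.real {ω | t ≤ |∑ i ∈ s, X i ω|} ≤
      2 * exp (-t ^ 2 / (2 * (∑ i ∈ s, ∫ ω, X i ω ^ 2 ∂μ + b * t / 3))) := by
  have h_upper := measure_sum_ge_le_exp_bernstein h_indep h_meas hb h0 ht
  have h_lower := measure_sum_ge_le_exp_bernstein (X := fun i ω => -X i ω)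
    (h_indep.comp (fun _ => Neg.neg) fun _ => measurable_neg) (fun i => (h_meas i).neg)
    (by simpa only [abs_neg] using hb) (by simpa only [integral_neg, neg_eq_zero] using h0) ht
  simp only [neg_sq, Finset.sum_neg_distrib] at h_lower
  have h_subset : {ω | t ≤ |∑ i ∈ s, X i ω|} ⊆
      {ω | t ≤ ∑ i ∈ s, X i ω} ∪ {ω | t ≤ -∑ i ∈ s, X i ω} := fun _ hω => by
    simpa only [Set.mem_union, Set.mem_ofPred_eq] using le_abs.mp hω
  calc μ.real {ω | t ≤ |∑ i ∈ s, X i ω|}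
      ≤ μ.real {ω | t ≤ ∑ i ∈ s, X i ω} + μ.real {ω | t ≤ -∑ i ∈ s, X i ω} :=
        (measureReal_mono h_subset).trans (measureReal_union_le _ _)
    _ ≤ _ := by linarith

theorem measure_abs_sum_comp_eval_ge_le_two_mul_exp_bernstein {S ι : Type*} [MeasurableSpace S]
    [Fintype ι] {ν : Measure S} [IsProbabilityMeasure ν] {f : S → ℝ} (hf : Measurable f)
    (hb : ∀ᵐ x ∂ν, |f x| ≤ b) (h0 : ν[f] = 0) (ht : 0 ≤ t) :
    (Measure.pi fun _ : ι => ν).real {Y | t ≤ |∑ i, f (Y i)|} ≤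
      2 * exp (-t ^ 2 / (2 * (Fintype.card ι * ∫ x, f x ^ 2 ∂ν + b * t / 3))) := by
  have h := measure_abs_sum_ge_le_two_mul_exp_bernstein (s := Finset.univ)
    (X := fun i (Y : ι → S) => f (Y i)) (iIndepFun_pi fun _ => hf.aemeasurable)
    (fun i => hf.comp (measurable_pi_apply i))
    (fun i _ => (Measure.quasiMeasurePreserving_eval (fun _ : ι => ν) i).ae
      (p := fun x => |f x| ≤ b) hb)
    (fun i _ => (integral_comp_eval hf.aestronglyMeasurable).trans h0) ht
  have h_sq (i : ι) : ∫ Y, f (Y i) ^ 2 ∂Measure.pi (fun _ => ν) = ∫ x, f x ^ 2 ∂ν :=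
    integral_comp_eval (μ := fun _ => ν) (f := fun x => f x ^ 2)
      (hf.pow_const 2).aestronglyMeasurable
  simpa only [h_sq, Finset.sum_const, Finset.card_univ, nsmul_eq_mul] using h

end Bernstein

namespace PMF

variable {X : Type*} (μ ν : PMF X)

/-- Junk value `0` where `ν x = 0`. -/
noncomputable def importanceWeight (x : X) : ℝ := (μ x).toReal / (ν x).toReal

lemma importanceWeight_nonneg (x : X) : 0 ≤ μ.importanceWeight ν x := by
  unfold importanceWeight; positivity

variable {μ ν}

lemma toReal_mul_importanceWeight (habs : ∀ x, μ x ≠ 0 → ν x ≠ 0) (x : X) :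
    (ν x).toReal * μ.importanceWeight ν x = (μ x).toReal := by
  by_cases hx : ν x = 0
  · simp [importanceWeight, hx, not_imp_not.mp (habs x) hx]
  · exact mul_div_cancel₀ _ (ENNReal.toReal_ne_zero.mpr ⟨hx, ν.apply_ne_top x⟩)

lemma importanceWeight_le_expDinf [Finite X] {x : X} (hx : ν x ≠ 0) :
    μ.importanceWeight ν x ≤ expDinf μ ν :=
  le_csSup (Set.toFinite _).bddAbove ⟨x, hx, rfl⟩

variable [Fintype X]

lemma sum_toReal_eq_one (μ : PMF X) : ∑ x, (μ x).toReal = 1 := by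
  rw [← ENNReal.toReal_sum fun x _ => μ.apply_ne_top x, ← tsum_fintype (L := .unconditional X),
    μ.tsum_coe, ENNReal.toReal_one]

lemma sum_toReal_mul_importanceWeight (habs : ∀ x, μ x ≠ 0 → ν x ≠ 0) :
    ∑ x, (ν x).toReal * μ.importanceWeight ν x = 1 := by
  simp only [toReal_mul_importanceWeight habs, sum_toReal_eq_one]

lemma sum_toReal_mul_importanceWeight_sq :
    ∑ x, (ν x).toReal * μ.importanceWeight ν x ^ 2 = expD2 μ ν := by
  rw [expD2, Finset.sum_filter]
  refine Finset.sum_congr rfl fun x _ => ?_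
  split_ifs with hx
  · have hν : (ν x).toReal ≠ 0 := ENNReal.toReal_ne_zero.mpr ⟨hx, ν.apply_ne_top x⟩
    rw [importanceWeight]; field_simp
  · simp [not_not.mp hx]

lemma one_le_expDinf (habs : ∀ x, μ x ≠ 0 → ν x ≠ 0) : 1 ≤ expDinf μ ν := by
  calc (1 : ℝ) = ∑ x, (ν x).toReal * μ.importanceWeight ν x :=
        (sum_toReal_mul_importanceWeight habs).symm
    _ ≤ ∑ x, (ν x).toReal * expDinf μ ν := by
        refine Finset.sum_le_sum fun x _ => ?_
        by_cases hx : ν x = 0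
        · simp [hx]
        · exact mul_le_mul_of_nonneg_left (importanceWeight_le_expDinf hx) ENNReal.toReal_nonneg
    _ = expDinf μ ν := by rw [← Finset.sum_mul, sum_toReal_eq_one, one_mul]

lemma abs_importanceWeight_sub_one_le (habs : ∀ x, μ x ≠ 0 → ν x ≠ 0) (x : X) :
    |μ.importanceWeight ν x - 1| ≤ expDinf μ ν := by
  have hB := one_le_expDinf habs
  have hw := importanceWeight_nonneg μ ν x
  have hwB : μ.importanceWeight ν x ≤ expDinf μ ν := by
    by_cases hx : ν x = 0
    · simp only [importanceWeight, hx, ENNReal.toReal_zero, div_zero]; linarith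
    · exact importanceWeight_le_expDinf hx
  rw [abs_le]; constructor <;> linarith

variable [MeasurableSpace X] [MeasurableSingletonClass X]

lemma integral_importanceWeight_sub_one (habs : ∀ x, μ x ≠ 0 → ν x ≠ 0) :
    ∫ x, (μ.importanceWeight ν x - 1) ∂ν.toMeasure = 0 := by
  simp only [integral_eq_sum, smul_eq_mul, mul_sub, mul_one, Finset.sum_sub_distrib,
    sum_toReal_mul_importanceWeight habs, sum_toReal_eq_one, sub_self]

lemma integral_importanceWeight_sub_one_sq (habs : ∀ x, μ x ≠ 0 → ν x ≠ 0) :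
    ∫ x, (μ.importanceWeight ν x - 1) ^ 2 ∂ν.toMeasure = expD2 μ ν - 1 := by
  have hexpand : ∀ x, (ν x).toReal * (μ.importanceWeight ν x - 1) ^ 2 =
      (ν x).toReal * μ.importanceWeight ν x ^ 2 - 2 * ((ν x).toReal * μ.importanceWeight ν x)
        + (ν x).toReal := fun x => by ring
  simp only [integral_eq_sum, smul_eq_mul, hexpand, Finset.sum_add_distrib,
    Finset.sum_sub_distrib, ← Finset.mul_sum, sum_toReal_mul_importanceWeight_sq,
    sum_toReal_mul_importanceWeight habs, sum_toReal_eq_one]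
  ring

end PMF

theorem importance_weight_concentration_general {X : Type*} [Fintype X]
    [MeasurableSpace X] [MeasurableSingletonClass X]
    (μ ν : PMF X) (habs : ∀ x, μ x ≠ 0 → ν x ≠ 0)
    (m : ℕ) (α : ℝ) (hα0 : 0 < α) :
    (Measure.pi fun _ : Fin m => ν.toMeasure)
        {Y : Fin m → X | α / 4 * m ≤
          |(∑ i, (μ (Y i)).toReal / (ν (Y i)).toReal) - m|}
      ≤ ENNReal.ofReal (2 * Real.exp
          (-(α ^ 2 * m) / (32 * (expD2 μ ν - 1) + 8 / 3 * α * expDinf μ ν))) := by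
  have h_bernstein := measure_abs_sum_comp_eval_ge_le_two_mul_exp_bernstein (ι := Fin m)
    (t := α / 4 * m) (Measurable.of_discrete (f := fun x => μ.importanceWeight ν x - 1))
    (ae_of_all _ (PMF.abs_importanceWeight_sub_one_le habs))
    (PMF.integral_importanceWeight_sub_one habs) (by positivity)
  rw [PMF.integral_importanceWeight_sub_one_sq habs, Fintype.card_fin] at h_bernstein
  have h_set : {Y : Fin m → X | α / 4 * m ≤ |(∑ i, (μ (Y i)).toReal / (ν (Y i)).toReal) - m|} =
      {Y | α / 4 * m ≤ |∑ i, (μ.importanceWeight ν (Y i) - 1)|} := by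
    simp [Finset.sum_sub_distrib, PMF.importanceWeight]
  have h_exponent :
      -(α / 4 * m) ^ 2 / (2 * (m * (expD2 μ ν - 1) + expDinf μ ν * (α / 4 * m) / 3))
        = -(α ^ 2 * m) / (32 * (expD2 μ ν - 1) + 8 / 3 * α * expDinf μ ν) := by
    rcases eq_or_ne (m : ℝ) 0 with hm | hm
    · simp [hm]
    · rw [show (α / 4 * m) ^ 2 = α ^ 2 * m * (m / 16) by ring,
        show 2 * (m * (expD2 μ ν - 1) + expDinf μ ν * (α / 4 * m) / 3)
          = (32 * (expD2 μ ν - 1) + 8 / 3 * α * expDinf μ ν) * (m / 16) by ring,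
        ← neg_mul, mul_div_mul_right _ _ (div_ne_zero hm (by norm_num))]
  rw [h_set, ← ofReal_measureReal, ← h_exponent]
  exact ENNReal.ofReal_le_ofReal h_bernstein

/-- Bernstein-type bound for the total importance weight: with `g(x) = μ(x)/ν(x)` (`0` when
`ν(x) = 0`), `V = e^{D₂(μ‖ν)}` and `B = e^{D∞(μ‖ν)}`, for `m` i.i.d. samples from `ν`,
`Pr[|Σᵢ g(Yᵢ) − m| ≥ (α/4)·m] ≤ 2·exp(−α²m/(32(V−1) + (8/3)αB))`. -/
theorem importance_weight_concentration {X : Type*} [Fintype X] [Nonempty X]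
    [MeasurableSpace X] [MeasurableSingletonClass X]
    (μ ν : PMF X) (habs : ∀ x, μ x ≠ 0 → ν x ≠ 0)
    (m : ℕ) (α : ℝ) (hα0 : 0 < α) (hα1 : α ≤ 1) :
    (Measure.pi fun _ : Fin m => ν.toMeasure)
        {Y : Fin m → X | α / 4 * m ≤
          |(∑ i, (μ (Y i)).toReal / (ν (Y i)).toReal) - m|}
      ≤ ENNReal.ofReal (2 * Real.exp
          (-(α ^ 2 * m) / (32 * (expD2 μ ν - 1) + 8 / 3 * α * expDinf μ ν))) :=
  importance_weight_concentration_general μ ν habs m α hα0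
end

section
/- Let X̂ be a nonempty finite type, let A and D* be probability mass functions on X̂ with A(x) > 0 for all x ∈ X̂, let φ : X̂ → [0,1] be a query, and let a ∈ [0,1]. Set c = Σ_x φ(x)·A(x) and t = Σ_x φ(x)·D*(x), and define the multiplicative-weights update A'(x) = A(x)·exp(φ(x)·(a − c)/2) / Σ_y A(y)·exp(φ(y)·(a − c)/2). Then KL(D*‖A) − KL(D*‖A') ≥ (1/4)·(2t − a − c)·(a − c). -/
/-- The Kullback–Leibler divergence `KL(P‖Q) = Σ_{x : P(x)>0} P(x)·log(P(x)/Q(x))` between two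
probability mass functions on a finite type, with `Q` everywhere positive. -/
noncomputable def KLdiv {X : Type*} [Fintype X] (P Q : X → ℝ) : ℝ :=
  ∑ x ∈ Finset.univ.filter (fun x => 0 < P x), P x * Real.log (P x / Q x)

/-- The answer of the query `φ` on the distribution `A`: `q_φ(A) = Σ_x φ(x)·A(x)`. -/
noncomputable def qA {X : Type*} [Fintype X] (φ : X → ℝ) (A : X → ℝ) : ℝ :=
  ∑ x, φ x * A x

lemma exp_le_quad {x : ℝ} (hx : |x| ≤ 1) : Real.exp x ≤ 1 + x + x ^ 2 := by
  have h := Real.exp_bound hx (n := 2) (by norm_num)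
  have h2 : |Real.exp x - (1 + x)| ≤ |x| ^ 2 * (3 / 4) := by
    norm_num [Finset.sum_range_succ] at h
    convert h using 2 <;> norm_num
  have h3 := (abs_le.mp h2).2
  nlinarith [sq_abs x, sq_nonneg x]

/-- One multiplicative-weights update step decreases the KL divergence to `D*` by at least
`(1/4)·(2t − a − c)·(a − c)`, where `c = q_φ(A)` and `t = q_φ(D*)`. -/
theorem mw_update_potential_drop {X : Type*} [Fintype X] [Nonempty X]
    (A Dstar : X → ℝ) (hA : ∀ x, 0 < A x) (hA1 : ∑ x, A x = 1)
    (hD0 : ∀ x, 0 ≤ Dstar x) (hD1 : ∑ x, Dstar x = 1)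
    (φ : X → ℝ) (hφ : ∀ x, φ x ∈ Set.Icc (0 : ℝ) 1)
    (a : ℝ) (ha : a ∈ Set.Icc (0 : ℝ) 1) :
    (1 / 4) * (2 * qA φ Dstar - a - qA φ A) * (a - qA φ A) ≤
      KLdiv Dstar A - KLdiv Dstar (fun x =>
        A x * Real.exp (φ x * (a - qA φ A) / 2) /
          ∑ y, A y * Real.exp (φ y * (a - qA φ A) / 2)) := by
  set c := qA φ A with hc
  set t := qA φ Dstar with ht
  set η := (a - c) / 2 with hη
  set Z := ∑ y, A y * Real.exp (φ y * (a - c) / 2) with hZdef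
  have hc0 : 0 ≤ c := Finset.sum_nonneg fun x _ => mul_nonneg (hφ x).1 (hA x).le
  have hc1 : c ≤ 1 := by
    rw [hc, qA, ← hA1]
    exact Finset.sum_le_sum fun x _ => by nlinarith [(hφ x).2, (hA x)]
  have hηabs : |η| ≤ 1 := by
    rw [abs_le]; constructor <;> [nlinarith [ha.1, ha.2]; nlinarith [ha.1, ha.2]]
  have hZpos : 0 < Z := Finset.sum_pos (fun x _ => mul_pos (hA x) (Real.exp_pos _)) Finset.univ_nonempty
  -- Z ≤ 1 + c * (exp η - 1)
  have hZle : Z ≤ 1 + c * (Real.exp η - 1) := by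
    have key : ∀ x : X, A x * Real.exp (φ x * (a - c) / 2) ≤
        A x * ((1 - φ x) + φ x * Real.exp η) := by
      intro x
      apply mul_le_mul_of_nonneg_left _ (hA x).le
      have hconv := convexOn_exp.2 (Set.mem_univ (0:ℝ)) (Set.mem_univ η)
        (by linarith [(hφ x).2] : (0:ℝ) ≤ 1 - φ x) (hφ x).1 (by ring)
      simp only [smul_eq_mul, mul_zero, zero_add, Real.exp_zero, mul_one] at hconv
      calc Real.exp (φ x * (a - c) / 2) = Real.exp (φ x * η) := by rw [hη]; ring_nf
        _ ≤ (1 - φ x) + φ x * Real.exp η := hconv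
    calc Z ≤ ∑ x, A x * ((1 - φ x) + φ x * Real.exp η) :=
          Finset.sum_le_sum fun x _ => key x
      _ = (∑ x, A x) - (∑ x, φ x * A x) + Real.exp η * ∑ x, φ x * A x := by
          rw [← Finset.sum_sub_distrib, Finset.mul_sum, ← Finset.sum_add_distrib]
          exact Finset.sum_congr rfl fun x _ => by ring
      _ = 1 + c * (Real.exp η - 1) := by rw [hA1, hc, qA]; ring
  have hlogZ : Real.log Z ≤ c * η + η ^ 2 := by
    have h1 := Real.log_le_sub_one_of_pos hZpos
    have h2 : Real.exp η ≤ 1 + η + η ^ 2 := exp_le_quad hηabs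
    nlinarith [sq_nonneg η]
  -- KL difference equals η t - log Z
  have hKL : KLdiv Dstar A - KLdiv Dstar (fun x =>
        A x * Real.exp (φ x * (a - c) / 2) / Z) = η * t - Real.log Z := by
    rw [KLdiv, KLdiv, ← Finset.sum_sub_distrib]
    have step : ∀ x ∈ Finset.univ.filter (fun x => 0 < Dstar x),
        Dstar x * Real.log (Dstar x / A x) -
          Dstar x * Real.log (Dstar x / (A x * Real.exp (φ x * (a - c) / 2) / Z)) =
        Dstar x * (φ x * η - Real.log Z) := by
      intro x hx
      have hDx : 0 < Dstar x := (Finset.mem_filter.mp hx).2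
      have hAx := hA x
      have hEx := Real.exp_pos (φ x * (a - c) / 2)
      rw [Real.log_div hDx.ne' hAx.ne',
        Real.log_div hDx.ne' (by positivity),
        Real.log_div (by positivity) hZpos.ne',
        Real.log_mul hAx.ne' hEx.ne', Real.log_exp]
      have : φ x * (a - c) / 2 = φ x * η := by rw [hη]; ring
      rw [this]; ring
    rw [Finset.sum_congr rfl step,
      Finset.sum_filter_of_ne (fun x _ h => by
        by_contra hn
        exact h (by rw [le_antisymm (not_lt.mp hn) (hD0 x), zero_mul]))]
    have : ∀ x : X, Dstar x * (φ x * η - Real.log Z) =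
        η * (φ x * Dstar x) - Real.log Z * Dstar x := fun x => by ring
    rw [Finset.sum_congr rfl fun x _ => this x, Finset.sum_sub_distrib,
      ← Finset.mul_sum, ← Finset.mul_sum, hD1, ht, qA, mul_one]
  rw [hKL]
  have h5 : (1/4)*(2*t-a-c)*(a-c) = η*t - c*η - η^2 := by rw [hη]; ring
  linarith
end

section
/- For all real ε̃ > 0 and δ ∈ (0,1), the infimum over α > 1 of (1/2)·ε̃²·α + log(1/(α·δ))/(α − 1) + log(1 − 1/α) is at most (1/2)·ε̃² + √(2·log(1/δ))·ε̃. -/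
/-- The infimum over `α > 1` of the zCDP-to-approximate-DP conversion expression is at most
`(1/2)·ε̃² + √(2·log(1/δ))·ε̃`. -/
theorem cdp_to_dp_bound (ε δ : ℝ) (hε : 0 < ε) (hδ0 : 0 < δ) (hδ1 : δ < 1) :
    sInf {y : ℝ | ∃ α : ℝ, 1 < α ∧
        y = (1 / 2) * ε ^ 2 * α + Real.log (1 / (α * δ)) / (α - 1) + Real.log (1 - 1 / α)}
      ≤ (1 / 2) * ε ^ 2 + Real.sqrt (2 * Real.log (1 / δ)) * ε := by
  set L : ℝ := Real.log (1 / δ) with hLdef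
  have hL : 0 < L := Real.log_pos (by rw [lt_div_iff₀ hδ0]; linarith)
  set s : ℝ := Real.sqrt (2 * L) with hsdef
  have hs : 0 < s := Real.sqrt_pos.2 (by linarith)
  have hs2 : s ^ 2 = 2 * L := Real.sq_sqrt (by linarith)
  set α : ℝ := 1 + s / ε with hαdef
  have hα : 1 < α := by
    have : 0 < s / ε := div_pos hs hε
    simp [hαdef]; linarith
  have hαpos : 0 < α := by linarith
  set S := {y : ℝ | ∃ α : ℝ, 1 < α ∧
        y = (1 / 2) * ε ^ 2 * α + Real.log (1 / (α * δ)) / (α - 1) + Real.log (1 - 1 / α)}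
  have hmem : (1 / 2) * ε ^ 2 * α + Real.log (1 / (α * δ)) / (α - 1) + Real.log (1 - 1 / α) ∈ S :=
    ⟨α, hα, rfl⟩
  have hval : (1 / 2) * ε ^ 2 * α + Real.log (1 / (α * δ)) / (α - 1) + Real.log (1 - 1 / α)
      ≤ (1 / 2) * ε ^ 2 + s * ε := by
    have hlog1 : Real.log (1 / (α * δ)) = L - Real.log α := by
      rw [one_div, Real.log_inv, Real.log_mul (ne_of_gt hαpos) (ne_of_gt hδ0),
        hLdef, one_div, Real.log_inv]
      ring
    have hα1 : α - 1 = s / ε := by simp [hαdef]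
    have ha : 0 ≤ Real.log α := Real.log_nonneg (le_of_lt hα)
    have hb : Real.log (1 - 1 / α) ≤ 0 := by
      apply Real.log_nonpos
      · have : 1 / α ≤ 1 := by
          rw [div_le_one hαpos]; linarith
        linarith
      · linarith [div_pos one_pos hαpos]
    rw [hlog1, hα1]
    have hdiv : (L - Real.log α) / (s / ε) = (L - Real.log α) * ε / s := by
      field_simp
    rw [hdiv]
    have hL' : L = s ^ 2 / 2 := by linarith
    rw [hL', hαdef]
    have key : (s ^ 2 / 2 - Real.log α) * ε / s ≤ s * ε / 2 := by
      rw [div_le_iff₀ hs]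
      have : Real.log α * ε ≥ 0 := mul_nonneg ha (le_of_lt hε)
      nlinarith
    have expand : (1 / 2) * ε ^ 2 * (1 + s / ε) = (1 / 2) * ε ^ 2 + s * ε / 2 := by
      field_simp
    rw [expand]
    linarith
  by_cases hb : BddBelow S
  · calc sInf S ≤ _ := csInf_le hb hmem
      _ ≤ _ := hval
  · rw [Real.sInf_of_not_bddBelow hb]
    have : 0 < Real.sqrt (2 * L) * ε := mul_pos hs hε
    positivity
end
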